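/- arXiv:1910.02791 — 5 statements merged into one kernel-verified Lean document; each statement's English description precedes it below -/
import Mathlib

section
/- Let D be an equireplicate block design with n blocks of size k on n symbols, each symbol occurring in exactly k blocks, and suppose every pair of distinct blocks intersects in exactly λ = k(k−1)/(n−1) symbols (λ an integer). Then every pair of distinct symbols occurs together in exactly λ blocks. -/
/-!
Fix a symbol `p` and let `μ q` be the number of blocks containing both `p` and `q`, for `q ≠ p`.
Counting incidences inside the `k` blocks through `p` gives `∑ μ q = k (k - 1) = (n - 1) λ`, and
counting pairs of such blocks gives `∑ μ q ^ 2 = k (k - 1) + k (k - 1) (λ - 1) = λ ∑ μ q`.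
So the `n - 1` numbers `μ q` have mean `λ` and variance `0`.
-/

open Finset

theorem Finset.eq_of_sum_sq_eq_mul_sum {ι R : Type*} [CommRing R] [LinearOrder R]
    [IsStrictOrderedRing R] {s : Finset ι} {x : ι → R} {c : R}
    (h₁ : ∑ i ∈ s, x i = #s * c) (h₂ : ∑ i ∈ s, x i ^ 2 = c * ∑ i ∈ s, x i) :
    ∀ i ∈ s, x i = c := by
  have hvar : ∑ i ∈ s, (x i - c) ^ 2 = 0 := by
    calc ∑ i ∈ s, (x i - c) ^ 2 = ∑ i ∈ s, x i ^ 2 - 2 * c * ∑ i ∈ s, x i + #s * c ^ 2 := by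
          simp only [sub_sq, sum_add_distrib, sum_sub_distrib, ← sum_mul, ← mul_sum, sum_const,
            nsmul_eq_mul]
          ring
      _ = 0 := by rw [h₂, h₁]; ring
  intro i hi
  have := (sum_eq_zero_iff_of_nonneg fun j _ => sq_nonneg (x j - c)).1 hvar i hi
  exact sub_eq_zero.1 (pow_eq_zero_iff two_ne_zero |>.1 this)

section DoubleCounting

variable {α ι : Type*} [DecidableEq α] (s : Finset α) (t : Finset ι) (B : ι → Finset α)

theorem Finset.sum_card_filter_mem_eq_sum_card_inter :
    ∑ a ∈ s, #{i ∈ t | a ∈ B i} = ∑ i ∈ t, #(s ∩ B i) := by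
  simp only [card_filter]
  rw [sum_comm]
  simp only [← card_filter, filter_mem_eq_inter]

theorem Finset.sum_card_filter_mem_sq_eq_sum_sum_card_inter :
    ∑ a ∈ s, #{i ∈ t | a ∈ B i} ^ 2 = ∑ i ∈ t, ∑ j ∈ t, #(s ∩ B i ∩ B j) := by
  simp only [sq, card_filter, sum_mul_sum, ite_zero_mul_ite_zero, mul_one]
  rw [sum_comm]
  refine sum_congr rfl fun i _ => ?_
  rw [sum_comm]
  simp only [← card_filter, ← filter_mem_eq_inter, filter_filter]

end DoubleCounting

section Design

variable {α ι : Type*} [DecidableEq α] [Fintype ι] {B : ι → Finset α} {p : α} {k lam : ℕ}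

theorem sum_card_filter_mem_and_mem_erase [Fintype α] (hsize : ∀ i, #(B i) = k)
    (hrep : #{i | p ∈ B i} = k) :
    ∑ q ∈ univ.erase p, (#{i | p ∈ B i ∧ q ∈ B i} : ℤ) = k * (k - 1) := by
  have := congrArg (Nat.cast : ℕ → ℤ)
    (sum_card_filter_mem_eq_sum_card_inter (univ.erase p) {i | p ∈ B i} B)
  simp only [filter_filter, erase_inter, univ_inter] at this
  push_cast at this
  rw [this, sum_congr rfl fun i hi => cast_card_erase_of_mem (mem_filter.1 hi).2]
  simp [hsize, hrep, mul_sub]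

theorem sum_card_inter_erase_of_mem [DecidableEq ι] (hsize : ∀ i, #(B i) = k)
    (hrep : #{i | p ∈ B i} = k) (hint : ∀ i j, i ≠ j → #(B i ∩ B j) = lam) {i : ι}
    (hi : p ∈ B i) :
    ∑ j ∈ {j | p ∈ B j}, (#((B i ∩ B j).erase p) : ℤ) = (k - 1) * lam := by
  have hi' : i ∈ ({j | p ∈ B j} : Finset ι) := mem_filter.2 ⟨mem_univ _, hi⟩
  have hother : ∀ j ∈ ({j | p ∈ B j} : Finset ι).erase i,
      (#((B i ∩ B j).erase p) : ℤ) = lam - 1 := by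
    intro j hj
    obtain ⟨hji, hj⟩ := mem_erase.1 hj
    rw [cast_card_erase_of_mem (mem_inter.2 ⟨hi, (mem_filter.1 hj).2⟩), hint i j hji.symm]
  rw [← add_sum_erase _ _ hi', inter_self, cast_card_erase_of_mem hi, hsize, sum_congr rfl hother,
    sum_const, nsmul_eq_mul, cast_card_erase_of_mem hi', hrep]
  ring

theorem sum_sq_card_filter_mem_and_mem_erase [Fintype α] [DecidableEq ι]
    (hsize : ∀ i, #(B i) = k) (hrep : #{i | p ∈ B i} = k)
    (hint : ∀ i j, i ≠ j → #(B i ∩ B j) = lam) :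
    ∑ q ∈ univ.erase p, (#{i | p ∈ B i ∧ q ∈ B i} : ℤ) ^ 2 = k * (k - 1) * lam := by
  have := congrArg (Nat.cast : ℕ → ℤ)
    (sum_card_filter_mem_sq_eq_sum_sum_card_inter (univ.erase p) {i | p ∈ B i} B)
  simp only [filter_filter, erase_inter, univ_inter] at this
  push_cast at this
  rw [this, sum_congr rfl fun i hi =>
      sum_card_inter_erase_of_mem hsize hrep hint (mem_filter.1 hi).2,
    sum_const, nsmul_eq_mul, hrep]
  ring

theorem card_filter_mem_and_mem_eq_of_linked [Fintype α] [DecidableEq ι]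
    (hsize : ∀ i, #(B i) = k) (hrep : #{i | p ∈ B i} = k)
    (hlam : lam * (Fintype.card α - 1) = k * (k - 1))
    (hint : ∀ i j, i ≠ j → #(B i ∩ B j) = lam) {q : α} (hqp : q ≠ p) :
    #{i | p ∈ B i ∧ q ∈ B i} = lam := by
  have hmean : ((#(univ.erase p) : ℕ) : ℤ) * lam = k * (k - 1) := by
    rw [card_erase_of_mem (mem_univ p), card_univ]
    have := congrArg (Nat.cast : ℕ → ℤ) hlam
    rcases k with _ | k <;> push_cast at this ⊢ <;> linarith
  have h₁ := sum_card_filter_mem_and_mem_erase hsize hrep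
  have h₂ := sum_sq_card_filter_mem_and_mem_erase hsize hrep hint
  exact_mod_cast eq_of_sum_sq_eq_mul_sum (h₁.trans hmean.symm) (by rw [h₂, h₁]; ring) q
    (mem_erase.2 ⟨hqp, mem_univ q⟩)

end Design

theorem linked_implies_balanced_general (n k lam : ℕ)
    (B : Fin n → Finset (Fin n))
    (hsize : ∀ i, (B i).card = k)
    (hrep : ∀ s : Fin n, (Finset.univ.filter fun i => s ∈ B i).card = k)
    (hlam : lam * (n - 1) = k * (k - 1))
    (hint : ∀ i j : Fin n, i ≠ j → (B i ∩ B j).card = lam) :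
    ∀ p q : Fin n, p ≠ q →
      (Finset.univ.filter fun i => p ∈ B i ∧ q ∈ B i).card = lam := by
  intro p q hpq
  exact card_filter_mem_and_mem_eq_of_linked hsize (hrep p) (by rwa [Fintype.card_fin]) hint
    hpq.symm

/-- A symmetric equireplicate design with constant block intersections `λ`
has every pair of distinct symbols covered by exactly `λ` blocks. -/
theorem linked_implies_balanced (n k lam : ℕ) (hn : 1 < n)
    (B : Fin n → Finset (Fin n))
    (hsize : ∀ i, (B i).card = k)
    (hrep : ∀ s : Fin n, (Finset.univ.filter fun i => s ∈ B i).card = k)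
    (hlam : lam * (n - 1) = k * (k - 1))
    (hint : ∀ i j : Fin n, i ≠ j → (B i ∩ B j).card = lam) :
    ∀ p q : Fin n, p ≠ q →
      (Finset.univ.filter fun i => p ∈ B i ∧ q ∈ B i).card = lam :=
  linked_implies_balanced_general n k lam B hsize hrep hlam hint
end

section
/- Tsuji's identity: Let D be a design with n blocks of size k on n symbols, each symbol occurring in exactly k blocks. Let l_{p,q} be the number of blocks containing both symbols p and q, and m_{i,j} the size of the intersection of blocks i and j, and set λ = k(k−1)/(n−1) (as a rational number). Then Σ_{p<q} (l_{p,q} − λ)² = Σ_{i<j} [ m_{i,j}² − (1 + 2(k−1)²/(n−2))·m_{i,j} + (k(k−1)/(n−1))·(1 − 2(k−1)/(n−2) + n·k(k−1)/((n−1)(n−2))) ], where the first sum ranges over 2-subsets of symbols and the second over 2-subsets of blocks. -/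
/-!
Let `N` be the block-by-symbol incidence matrix. The covering numbers are the entries of `NᵀN`
and the intersection numbers those of `NNᵀ`. Both matrices have diagonal `k` and entry sum `nk²`
(all row and column sums of `N` are `k`), and they have the same sum of squared entries, since
`tr ((NᵀN)²) = tr ((NNᵀ)²)`. Hence over the pairs `p < q` the two families have the same first and
second moments, and the identity reduces to an identity between rational functions of `n` and `k`.
-/

open Finset

namespace Matrix

variable {ι α R : Type*}

def incidence (R : Type*) [Zero R] [One R] [DecidableEq α] (B : ι → Finset α) : Matrix ι α R :=
  of fun i p => if p ∈ B i then 1 else 0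

section
variable [NonAssocSemiring R] [DecidableEq α] (B : ι → Finset α)

theorem incidence_transpose_mul_incidence_apply [Fintype ι] (p q : α) :
    ((incidence R B)ᵀ * incidence R B) p q = #{i | p ∈ B i ∧ q ∈ B i} := by
  simp [incidence, mul_apply, ← ite_and, Finset.sum_boole, and_comm]

theorem incidence_mul_incidence_transpose_apply [Fintype α] (i j : ι) :
    (incidence R B * (incidence R B)ᵀ) i j = #(B i ∩ B j) := by
  simp [incidence, mul_apply, Finset.inter_comm]

theorem sum_incidence_apply_right [Fintype α] (i : ι) : ∑ p, incidence R B i p = #(B i) := by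
  simp [incidence]

theorem sum_incidence_apply_left [Fintype ι] (p : α) :
    ∑ i, incidence R B i p = #{i | p ∈ B i} := by
  simp [incidence]
end

variable [Fintype ι] [Fintype α]

section
variable [Semiring R]

theorem sum_sum_mul_transpose_apply (A : Matrix ι α R) :
    ∑ i, ∑ j, (A * Aᵀ) i j = ∑ p, (∑ i, A i p) ^ 2 := by
  simp only [mul_apply, transpose_apply, sq, sum_mul_sum]
  conv_rhs => rw [sum_comm]
  exact sum_congr rfl fun _ _ => sum_comm

theorem sum_sum_transpose_mul_apply (A : Matrix ι α R) :
    ∑ p, ∑ q, (Aᵀ * A) p q = ∑ i, (∑ p, A i p) ^ 2 := by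
  simpa using sum_sum_mul_transpose_apply Aᵀ

theorem sum_sum_sq_eq_trace_mul_transpose (M : Matrix ι α R) :
    ∑ i, ∑ j, M i j ^ 2 = trace (M * Mᵀ) := by
  simp [trace, mul_apply, sq]
end

theorem sum_sum_sq_mul_transpose_apply [CommSemiring R] (A : Matrix ι α R) :
    ∑ i, ∑ j, (A * Aᵀ) i j ^ 2 = ∑ p, ∑ q, (Aᵀ * A) p q ^ 2 := by
  simp only [sum_sum_sq_eq_trace_mul_transpose, transpose_mul, transpose_transpose, Matrix.mul_assoc]
  rw [trace_mul_comm]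
  simp only [Matrix.mul_assoc]
end Matrix

theorem sum_filter_lt_add_self_of_symm {α M : Type*} [Fintype α] [LinearOrder α] [AddCommGroup M]
    (f : α → α → M) (hf : ∀ p q, f p q = f q p) :
    ∑ x ∈ univ.filter (fun x : α × α => x.1 < x.2), f x.1 x.2
      + ∑ x ∈ univ.filter (fun x : α × α => x.1 < x.2), f x.1 x.2
      = ∑ p, ∑ q, f p q - ∑ p, f p p := by
  have hgt : ∑ x ∈ univ.filter (fun x : α × α => ¬ x.1 < x.2 ∧ x.2 < x.1), f x.1 x.2
      = ∑ x ∈ univ.filter (fun x : α × α => x.1 < x.2), f x.1 x.2 := by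
    refine sum_equiv (Equiv.prodComm α α) (fun x => ?_) (fun x _ => hf _ _)
    simpa using fun h : x.2 < x.1 => h.not_gt
  have hdiag : ∑ x ∈ univ.filter (fun x : α × α => ¬ x.1 < x.2 ∧ ¬ x.2 < x.1), f x.1 x.2
      = ∑ p, f p p := by
    simp only [not_lt, ← le_antisymm_iff, sum_filter, Fintype.sum_prod_type, sum_ite_eq',
      mem_univ, if_true]
  have hsplit := sum_filter_add_sum_filter_not
    (univ.filter fun x : α × α => ¬ x.1 < x.2) (fun x => x.2 < x.1) (fun x => f x.1 x.2)
  rw [filter_filter, filter_filter, hgt, hdiag] at hsplit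
  rw [← Fintype.sum_prod_type', ← sum_filter_add_sum_filter_not univ (fun x : α × α => x.1 < x.2),
    ← hsplit]
  abel

theorem tsuji_identity_of_moments {n : ℕ} (hn : 3 ≤ n) (k : ℚ) (l m : Fin n → Fin n → ℚ)
    (hl_symm : ∀ p q, l p q = l q p) (hm_symm : ∀ i j, m i j = m j i)
    (hl_diag : ∀ p, l p p = k) (hm_diag : ∀ i, m i i = k)
    (hl_sum : ∑ p, ∑ q, l p q = n * k ^ 2) (hm_sum : ∑ i, ∑ j, m i j = n * k ^ 2)
    (hsq_sum : ∑ p, ∑ q, l p q ^ 2 = ∑ i, ∑ j, m i j ^ 2) :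
    ∑ x ∈ univ.filter (fun x : Fin n × Fin n => x.1 < x.2), (l x.1 x.2 - k * (k - 1) / (n - 1)) ^ 2
      = ∑ x ∈ univ.filter (fun x : Fin n × Fin n => x.1 < x.2),
          (m x.1 x.2 ^ 2 - (1 + 2 * (k - 1) ^ 2 / (n - 2)) * m x.1 x.2
            + k * (k - 1) / (n - 1)
              * (1 - 2 * (k - 1) / (n - 2) + n * k * (k - 1) / ((n - 1) * (n - 2)))) := by
  set T := univ.filter (fun x : Fin n × Fin n => x.1 < x.2)
  have hT := sum_filter_lt_add_self_of_symm (fun _ _ : Fin n => (1 : ℚ)) (fun _ _ => rfl)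
  have hl := sum_filter_lt_add_self_of_symm l hl_symm
  have hm := sum_filter_lt_add_self_of_symm m hm_symm
  have hl2 := sum_filter_lt_add_self_of_symm (fun p q => l p q ^ 2) (by simp [hl_symm])
  have hm2 := sum_filter_lt_add_self_of_symm (fun i j => m i j ^ 2) (by simp [hm_symm])
  simp only [hl_diag, hm_diag, hl_sum, hm_sum, hsq_sum, sum_const, card_univ, Fintype.card_fin,
    nsmul_eq_mul, mul_one] at hT hl hm hl2 hm2
  have hn' : (3 : ℚ) ≤ n := by exact_mod_cast hn
  have hn1 : (n : ℚ) - 1 ≠ 0 := by linarith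
  have hn2 : (n : ℚ) - 2 ≠ 0 := by linarith
  simp only [sub_sq, sum_add_distrib, sum_sub_distrib, ← mul_sum, ← sum_mul, sum_const, nsmul_eq_mul]
  have hSl : ∑ x ∈ T, l x.1 x.2 = n * k * (k - 1) / 2 := by linarith
  have hSm : ∑ x ∈ T, m x.1 x.2 = n * k * (k - 1) / 2 := by linarith
  have hSsq : ∑ x ∈ T, l x.1 x.2 ^ 2 = ∑ x ∈ T, m x.1 x.2 ^ 2 := by linarith
  have hcard : (#T : ℚ) = n * (n - 1) / 2 := by linarith
  rw [hSl, hSm, hSsq, hcard]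
  field_simp
  ring

/-- Tsuji's identity relating covering numbers and block intersection numbers
for an equireplicate symmetric design. -/
theorem tsuji_identity (n k : ℕ) (hn : 3 ≤ n)
    (B : Fin n → Finset (Fin n))
    (hsize : ∀ i, (B i).card = k)
    (hrep : ∀ s : Fin n, (Finset.univ.filter fun i => s ∈ B i).card = k) :
    (∑ p ∈ Finset.univ.filter (fun p : Fin n × Fin n => p.1 < p.2),
        (((Finset.univ.filter fun i => p.1 ∈ B i ∧ p.2 ∈ B i).card : ℚ)
          - (k : ℚ) * ((k : ℚ) - 1) / ((n : ℚ) - 1)) ^ 2)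
      =
    (∑ p ∈ Finset.univ.filter (fun p : Fin n × Fin n => p.1 < p.2),
        (((B p.1 ∩ B p.2).card : ℚ) ^ 2
          - (1 + 2 * ((k : ℚ) - 1) ^ 2 / ((n : ℚ) - 2)) * ((B p.1 ∩ B p.2).card : ℚ)
          + ((k : ℚ) * ((k : ℚ) - 1) / ((n : ℚ) - 1))
            * (1 - 2 * ((k : ℚ) - 1) / ((n : ℚ) - 2)
               + (n : ℚ) * (k : ℚ) * ((k : ℚ) - 1) / (((n : ℚ) - 1) * ((n : ℚ) - 2))))) := by
  set A := Matrix.incidence ℚ B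
  simp only [← Matrix.incidence_transpose_mul_incidence_apply (R := ℚ) B,
    ← Matrix.incidence_mul_incidence_transpose_apply (R := ℚ) B]
  apply tsuji_identity_of_moments hn
  · exact fun p q => (Matrix.isSymm_transpose_mul_self A).apply q p
  · exact fun i j => (Matrix.isSymm_mul_transpose_self A).apply j i
  · intro p
    simp [Matrix.incidence_transpose_mul_incidence_apply, hrep]
  · intro i
    simp [Matrix.incidence_mul_incidence_transpose_apply, hsize]
  · rw [Matrix.sum_sum_transpose_mul_apply]
    simp [Matrix.sum_incidence_apply_right, hsize]
  · rw [Matrix.sum_sum_mul_transpose_apply]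
    simp [Matrix.sum_incidence_apply_left, hrep]
  · exact (Matrix.sum_sum_sq_mul_transpose_apply A).symm
end

section
/- If Y is a k×n near Youden rectangle and Y is extended to an n×n Latin square L, then the (n−k)×n array formed by the new n−k rows of L is an (n−k)×n near Youden rectangle. -/
open Finset

/-- The set of symbols occurring in the top `k` cells of column `j` of an
`n × n` array. -/
def topSet (n k : ℕ) (L : Fin n → Fin n → Fin n) (j : Fin n) : Finset (Fin n) :=
  (Finset.univ.filter fun i : Fin n => i.val < k).image fun i => L i j

/-- The set of symbols occurring in the bottom `n - k` cells of column `j` of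
an `n × n` array. -/
def bottomRowsSet (n k : ℕ) (L : Fin n → Fin n → Fin n) (j : Fin n) : Finset (Fin n) :=
  (Finset.univ.filter fun i : Fin n => k ≤ i.val).image fun i => L i j

/-!
Each column of a Latin square contains every symbol once, so the bottom part of a column holds
exactly the symbols missing from its top part. For two columns with top sets `A`, `B` of size `k`,
inclusion–exclusion gives `|Aᶜ ∩ Bᶜ| = |A ∩ B| + n - 2k`, and the identity
`(n-k)(n-k-1) = k(k-1) + (n-2k)(n-1)` shows that the same shift by `n - 2k` carries
`⌊k(k-1)/(n-1)⌋` to `⌊(n-k)(n-k-1)/(n-1)⌋`.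
-/

theorem Finset.image_compl_of_bijective {α β : Type*} [Fintype α] [Fintype β] [DecidableEq α]
    [DecidableEq β] {f : α → β} (hf : Function.Bijective f) (s : Finset α) :
    sᶜ.image f = (s.image f)ᶜ :=
  coe_injective <| by push_cast; exact Set.image_compl_eq hf

theorem Finset.card_compl_inter_compl_add {α : Type*} [Fintype α] [DecidableEq α]
    (s t : Finset α) : #(sᶜ ∩ tᶜ) + #s + #t = Fintype.card α + #(s ∩ t) := by
  rw [← compl_union, card_compl]
  have := card_union_add_card_inter s t
  have := card_le_univ (s ∪ t)
  omega

theorem Nat.sub_mul_sub_one_div_add_two_mul {n k : ℕ} (hkn : k ≤ n) (hn : 2 ≤ n) :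
    (n - k) * (n - k - 1) / (n - 1) + 2 * k = k * (k - 1) / (n - 1) + n := by
  have hid : (n - k) * (n - k - 1) + 2 * k * (n - 1) = k * (k - 1) + n * (n - 1) := by
    obtain ⟨m, rfl⟩ := Nat.exists_eq_add_of_le hkn
    rcases k with _ | k <;> rcases m with _ | m <;> simp <;> ring
  rw [← Nat.add_mul_div_right _ _ (by omega : 0 < n - 1),
    ← Nat.add_mul_div_right _ _ (by omega : 0 < n - 1), hid]

section LatinColumn

variable {n : ℕ} (k : ℕ) {L : Fin n → Fin n → Fin n} {j : Fin n}

theorem bottomRowsSet_eq_compl_topSet (hcol : Function.Injective fun i => L i j) :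
    bottomRowsSet n k L j = (topSet n k L j)ᶜ := by
  rw [topSet, ← image_compl_of_bijective (Finite.injective_iff_bijective.mp hcol), compl_filter]
  simp only [bottomRowsSet, not_lt]

theorem card_topSet (hcol : Function.Injective fun i => L i j) :
    #(topSet n k L j) = min n k := by
  rw [topSet, card_image_of_injective _ hcol, Fin.card_filter_val_lt]

end LatinColumn

theorem near_youden_complement_general (n k : ℕ) (hkn : k < n)
    (L : Fin n → Fin n → Fin n)
    (hcol : ∀ j : Fin n, Function.Injective fun i => L i j)
    (htop : ∀ j j' : Fin n, j ≠ j' →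
      (topSet n k L j ∩ topSet n k L j').card = k * (k - 1) / (n - 1) ∨
      (topSet n k L j ∩ topSet n k L j').card = k * (k - 1) / (n - 1) + 1) :
    ∀ j j' : Fin n, j ≠ j' →
      (bottomRowsSet n k L j ∩ bottomRowsSet n k L j').card = (n - k) * (n - k - 1) / (n - 1) ∨
      (bottomRowsSet n k L j ∩ bottomRowsSet n k L j').card = (n - k) * (n - k - 1) / (n - 1) + 1 := by
  intro j j' hjj
  have hn : 2 ≤ n := by have := Fin.val_ne_of_ne hjj; omega
  have hshift := Nat.sub_mul_sub_one_div_add_two_mul hkn.le hn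
  have hcard := card_compl_inter_compl_add (topSet n k L j) (topSet n k L j')
  rw [card_topSet k (hcol j), card_topSet k (hcol j'), Fintype.card_fin] at hcard
  rw [bottomRowsSet_eq_compl_topSet k (hcol j), bottomRowsSet_eq_compl_topSet k (hcol j')]
  rcases htop j j' hjj with h | h <;> omega

/-- If the top `k` rows of a Latin square `L` form a `k × n` near Youden
rectangle, then the bottom `n - k` rows form an `(n-k) × n` near Youden
rectangle. -/
theorem near_youden_complement (n k : ℕ) (hk : 0 < k) (hkn : k < n)
    (hnd : ¬ (n - 1) ∣ k * (k - 1))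
    (L : Fin n → Fin n → Fin n)
    (hrow : ∀ i, Function.Injective (L i))
    (hcol : ∀ j : Fin n, Function.Injective fun i => L i j)
    (htop : ∀ j j' : Fin n, j ≠ j' →
      (topSet n k L j ∩ topSet n k L j').card = k * (k - 1) / (n - 1) ∨
      (topSet n k L j ∩ topSet n k L j').card = k * (k - 1) / (n - 1) + 1) :
    ∀ j j' : Fin n, j ≠ j' →
      (bottomRowsSet n k L j ∩ bottomRowsSet n k L j').card = (n - k) * (n - k - 1) / (n - 1) ∨
      (bottomRowsSet n k L j ∩ bottomRowsSet n k L j').card = (n - k) * (n - k - 1) / (n - 1) + 1 :=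
  near_youden_complement_general n k hkn L hcol htop
end

section
/- Let R be the RL-form of a triple array T with v = r + c − 1 (R is the r×v array obtained by exchanging the roles of columns and symbols in T). Then for any two distinct columns C₁ and C₂ of R, the sum of the number of common non-empty rows of C₁ and C₂ and the number of common symbols of C₁ and C₂ equals e, the replication number of T. -/
open Finset

/-- The set of symbols occurring in row `i` of an `r × c` array on `v` symbols. -/
def rowSymbols {r c v : ℕ} (T : Fin r → Fin c → Fin v) (i : Fin r) : Finset (Fin v) :=
  Finset.univ.image (T i)

/-- The set of symbols occurring in column `j` of an `r × c` array on `v` symbols. -/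
def colSymbols {r c v : ℕ} (T : Fin r → Fin c → Fin v) (j : Fin c) : Finset (Fin v) :=
  Finset.univ.image fun i => T i j

lemma sum_mul_sum_comm {ι m n : Type*} [Fintype ι] [Fintype m] [Fintype n]
    (f : ι → m → ℚ) (g : ι → n → ℚ) (a : m → ℚ) (b : n → ℚ) :
    ∑ u : ι, (∑ i, a i * f u i) * (∑ j, b j * g u j)
      = ∑ i, ∑ j, (a i * b j) * (∑ u, f u i * g u j) := by
  have h1 : ∀ u : ι, (∑ i, a i * f u i) * (∑ j, b j * g u j)
      = ∑ i, ∑ j, (a i * b j) * (f u i * g u j) := by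
    intro u
    rw [Finset.sum_mul_sum]
    exact Finset.sum_congr rfl fun i _ => Finset.sum_congr rfl fun j _ => by ring
  rw [Finset.sum_congr rfl fun u _ => h1 u, Finset.sum_comm]
  refine Finset.sum_congr rfl fun i _ => ?_
  rw [Finset.sum_comm]
  exact Finset.sum_congr rfl fun j _ => by rw [Finset.mul_sum]

lemma eval_quad {m : Type*} [Fintype m] [DecidableEq m] (a b : m → ℚ) (x y : ℚ) :
    ∑ i : m, ∑ i' : m, (a i * b i') * (x * (if i = i' then 1 else 0) + y)
      = x * (∑ i, a i * b i) + y * ((∑ i, a i) * (∑ i', b i')) := by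
  have h1 : ∀ i : m, ∑ i' : m, (a i * b i') * (x * (if i = i' then 1 else 0) + y)
      = x * (a i * b i) + y * (a i * ∑ i', b i') := by
    intro i
    have h2 : ∀ i' : m, (a i * b i') * (x * (if i = i' then 1 else 0) + y)
        = (if i = i' then x * (a i * b i') else 0) + y * (a i * b i') := by
      intro i'
      by_cases h : i = i' <;> simp [h] <;> ring
    rw [Finset.sum_congr rfl fun i' _ => h2 i', Finset.sum_add_distrib,
      Finset.sum_ite_eq, if_pos (mem_univ i), ← Finset.mul_sum, ← Finset.mul_sum]
  rw [Finset.sum_congr rfl fun i _ => h1 i, Finset.sum_add_distrib,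
    ← Finset.mul_sum, ← Finset.mul_sum, ← Finset.sum_mul]

lemma eval_cross {m n : Type*} [Fintype m] [Fintype n] (a : m → ℚ) (b : n → ℚ) (y : ℚ) :
    ∑ i : m, ∑ j : n, (a i * b j) * y = y * ((∑ i, a i) * (∑ j, b j)) := by
  rw [Finset.sum_mul_sum]
  rw [Finset.mul_sum]
  refine Finset.sum_congr rfl fun i _ => ?_
  rw [Finset.mul_sum]
  exact Finset.sum_congr rfl fun j _ => by ring

lemma ind_mul (P Q : Prop) [Decidable P] [Decidable Q] :
    (if P then (1:ℚ) else 0) * (if Q then 1 else 0) = if P ∧ Q then 1 else 0 := by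
  by_cases hP : P <;> by_cases hQ : Q <;> simp [hP, hQ]

lemma count_rows {r c v e : ℕ} (T : Fin r → Fin c → Fin v)
    (hrowInj : ∀ i, Function.Injective (T i))
    (hrep : ∀ s : Fin v,
      (Finset.univ.filter fun p : Fin r × Fin c => T p.1 p.2 = s).card = e)
    (s : Fin v) : (Finset.univ.filter fun i : Fin r => ∃ j, T i j = s).card = e := by
  rw [← hrep s]
  refine (Finset.card_bij (fun (p : Fin r × Fin c) _ => p.1) ?_ ?_ ?_).symm
  · intro p hp
    simp only [mem_filter, mem_univ, true_and] at hp ⊢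
    exact ⟨p.2, hp⟩
  · intro p hp q hq h
    simp only [mem_filter, mem_univ, true_and] at hp hq
    change p.1 = q.1 at h
    refine Prod.ext h (hrowInj p.1 ?_)
    show T p.1 p.2 = T p.1 q.2
    rw [hp, h, hq]
  · intro i hi
    simp only [mem_filter, mem_univ, true_and] at hi
    obtain ⟨j, hj⟩ := hi
    exact ⟨(i, j), by simp [hj], rfl⟩


/-- Corollary 1 of [NO15]: in the RL-form of a triple array `T` with
`v = r + c - 1`, for any two distinct columns (indexed by symbols `s₁ ≠ s₂`
of `T`), the number of common non-empty rows plus the number of common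
symbols equals the replication number `e`. -/
theorem RL_form_sum_constant (r c v e lrr lcc lrc : ℕ) (hv : v + 1 = r + c)
    (T : Fin r → Fin c → Fin v)
    (hrowInj : ∀ i, Function.Injective (T i))
    (hcolInj : ∀ j : Fin c, Function.Injective fun i => T i j)
    (hrep : ∀ s : Fin v,
      (Finset.univ.filter fun p : Fin r × Fin c => T p.1 p.2 = s).card = e)
    (hrr : ∀ i i' : Fin r, i ≠ i' →
      (rowSymbols T i ∩ rowSymbols T i').card = lrr)
    (hcc : ∀ j j' : Fin c, j ≠ j' →
      (colSymbols T j ∩ colSymbols T j').card = lcc)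
    (hrc : ∀ (i : Fin r) (j : Fin c),
      (rowSymbols T i ∩ colSymbols T j).card = lrc)
    (s₁ s₂ : Fin v) (hs : s₁ ≠ s₂) :
    (Finset.univ.filter fun i : Fin r =>
        (∃ j, T i j = s₁) ∧ (∃ j, T i j = s₂)).card
      + (Finset.univ.filter fun j : Fin c =>
        (∃ i, T i j = s₁) ∧ (∃ i, T i j = s₂)).card = e := by
  -- degenerate case r = 0
  rcases Nat.eq_zero_or_pos r with hr0 | hrpos
  · subst hr0
    have he : e = 0 := by simpa using (hrep s₁).symm
    simp [he]
  -- degenerate case c = 0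
  rcases Nat.eq_zero_or_pos c with hc0 | hcpos
  · subst hc0
    have he : e = 0 := by simpa using (hrep s₁).symm
    simp [he]
  -- degenerate case r = 1
  rcases eq_or_lt_of_le (show 1 ≤ r from hrpos) with hr1 | hr2
  · subst hr1
    have hsurj : ∀ s : Fin v, ∃ j, T 0 j = s := by
      have hbij : Function.Bijective (T 0) := by
        rw [Fintype.bijective_iff_injective_and_card]
        exact ⟨hrowInj 0, by simp only [Fintype.card_fin]; omega⟩
      exact fun s => hbij.2 s
    have he : e = 1 := by
      obtain ⟨j₁, hj₁⟩ := hsurj s₁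
      rw [← hrep s₁, Finset.card_eq_one]
      refine ⟨(0, j₁), ?_⟩
      ext p
      simp only [mem_filter, mem_univ, true_and, mem_singleton]
      constructor
      · intro hp
        have h1 : p.1 = 0 := Subsingleton.elim _ _
        rw [h1] at hp
        have h2 : p.2 = j₁ := hrowInj 0 (hp.trans hj₁.symm)
        exact Prod.ext h1 h2
      · intro hp; subst hp; exact hj₁
    rw [he]
    have h1 : (Finset.univ.filter fun i : Fin 1 =>
        (∃ j, T i j = s₁) ∧ (∃ j, T i j = s₂)).card = 1 := by
      rw [Finset.filter_true_of_mem, Finset.card_univ, Fintype.card_fin]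
      intro i _
      have hi : i = 0 := Subsingleton.elim _ _
      subst hi
      exact ⟨hsurj s₁, hsurj s₂⟩
    have h2 : (Finset.univ.filter fun j : Fin c =>
        (∃ i, T i j = s₁) ∧ (∃ i, T i j = s₂)).card = 0 := by
      rw [Finset.card_eq_zero, Finset.filter_eq_empty_iff]
      rintro j - ⟨⟨i₁, h₁⟩, ⟨i₂, h₂⟩⟩
      have hi : i₁ = i₂ := Subsingleton.elim _ _
      exact hs (h₁ ▸ hi ▸ h₂ ▸ rfl)
    rw [h1, h2]
  -- degenerate case c = 1
  rcases eq_or_lt_of_le (show 1 ≤ c from hcpos) with hc1 | hc2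
  · subst hc1
    have hsurj : ∀ s : Fin v, ∃ i, T i 0 = s := by
      have hbij : Function.Bijective (fun i => T i 0) := by
        rw [Fintype.bijective_iff_injective_and_card]
        exact ⟨hcolInj 0, by simp only [Fintype.card_fin]; omega⟩
      exact fun s => hbij.2 s
    have he : e = 1 := by
      obtain ⟨i₁, hi₁⟩ := hsurj s₁
      rw [← hrep s₁, Finset.card_eq_one]
      refine ⟨(i₁, 0), ?_⟩
      ext p
      simp only [mem_filter, mem_univ, true_and, mem_singleton]
      constructor
      · intro hp
        have h2 : p.2 = 0 := Subsingleton.elim _ _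
        rw [h2] at hp
        have h1 : p.1 = i₁ := hcolInj 0 (show T p.1 0 = T i₁ 0 from hp.trans hi₁.symm)
        exact Prod.ext h1 h2
      · intro hp; subst hp; exact hi₁
    rw [he]
    have h1 : (Finset.univ.filter fun i : Fin r =>
        (∃ j, T i j = s₁) ∧ (∃ j, T i j = s₂)).card = 0 := by
      rw [Finset.card_eq_zero, Finset.filter_eq_empty_iff]
      rintro i - ⟨⟨j₁, h₁⟩, ⟨j₂, h₂⟩⟩
      have hj : j₁ = j₂ := Subsingleton.elim _ _
      exact hs (h₁ ▸ hj ▸ h₂ ▸ rfl)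
    have h2 : (Finset.univ.filter fun j : Fin 1 =>
        (∃ i, T i j = s₁) ∧ (∃ i, T i j = s₂)).card = 1 := by
      rw [Finset.filter_true_of_mem, Finset.card_univ, Fintype.card_fin]
      intro j _
      have hj : j = 0 := Subsingleton.elim _ _
      subst hj
      exact ⟨hsurj s₁, hsurj s₂⟩
    rw [h1, h2]
  -- main case: 2 ≤ r and 2 ≤ c
  set nr : Fin v → Fin r → ℚ := fun s i => if ∃ j, T i j = s then 1 else 0 with hnr
  set nc : Fin v → Fin c → ℚ := fun s j => if ∃ i, T i j = s then 1 else 0 with hnc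
  -- transposed replication
  have hrep' : ∀ s : Fin v,
      (Finset.univ.filter fun p : Fin c × Fin r => T p.2 p.1 = s).card = e := by
    intro s
    rw [← hrep s]
    refine Finset.card_bij (fun p _ => p.swap) ?_ ?_ ?_
    · intro p hp; simp only [mem_filter, mem_univ, true_and] at hp ⊢; exact hp
    · intro p _ q _ h; exact Prod.swap_injective h
    · intro p hp
      simp only [mem_filter, mem_univ, true_and] at hp
      exact ⟨p.swap, by simpa using hp, by simp⟩
  have hR : ∀ s : Fin v, (Finset.univ.filter fun i : Fin r => ∃ j, T i j = s).card = e :=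
    count_rows T hrowInj hrep
  have hC : ∀ s : Fin v, (Finset.univ.filter fun j : Fin c => ∃ i, T i j = s).card = e :=
    count_rows (fun j i => T i j) hcolInj hrep'
  have A1 : ∀ s, ∑ i, nr s i = (e : ℚ) := by
    intro s
    rw [hnr, Finset.sum_boole]
    exact_mod_cast hR s
  have A2 : ∀ s, ∑ j, nc s j = (e : ℚ) := by
    intro s
    rw [hnc, Finset.sum_boole]
    exact_mod_cast hC s
  have A3 : ∀ i, ∑ s, nr s i = (c : ℚ) := by
    intro i
    rw [hnr, Finset.sum_boole]
    have h : (Finset.univ.filter fun s : Fin v => ∃ j, T i j = s) = rowSymbols T i := by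
      ext s; simp [rowSymbols, eq_comm]
    rw [h, rowSymbols, Finset.card_image_of_injective _ (hrowInj i), Finset.card_univ,
      Fintype.card_fin]
  have A4 : ∀ j, ∑ s, nc s j = (r : ℚ) := by
    intro j
    rw [hnc, Finset.sum_boole]
    have h : (Finset.univ.filter fun s : Fin v => ∃ i, T i j = s) = colSymbols T j := by
      ext s; simp [colSymbols, eq_comm]
    rw [h, colSymbols, Finset.card_image_of_injective _ (hcolInj j), Finset.card_univ,
      Fintype.card_fin]
  have A5 : ∀ i i', i ≠ i' → ∑ s, nr s i * nr s i' = (lrr : ℚ) := by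
    intro i i' h
    rw [Finset.sum_congr rfl fun s _ => ind_mul _ _, Finset.sum_boole]
    have hf : (Finset.univ.filter fun s : Fin v => (∃ j, T i j = s) ∧ ∃ j, T i' j = s)
        = rowSymbols T i ∩ rowSymbols T i' := by
      ext s; simp [rowSymbols, eq_comm]
    rw [hf, hrr i i' h]
  have A6 : ∀ j j', j ≠ j' → ∑ s, nc s j * nc s j' = (lcc : ℚ) := by
    intro j j' h
    rw [Finset.sum_congr rfl fun s _ => ind_mul _ _, Finset.sum_boole]
    have hf : (Finset.univ.filter fun s : Fin v => (∃ i, T i j = s) ∧ ∃ i, T i j' = s)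
        = colSymbols T j ∩ colSymbols T j' := by
      ext s; simp [colSymbols, eq_comm]
    rw [hf, hcc j j' h]
  have A7 : ∀ i j, ∑ s, nr s i * nc s j = (lrc : ℚ) := by
    intro i j
    rw [Finset.sum_congr rfl fun s _ => ind_mul _ _, Finset.sum_boole]
    have hf : (Finset.univ.filter fun s : Fin v => (∃ j', T i j' = s) ∧ ∃ i', T i' j = s)
        = rowSymbols T i ∩ colSymbols T j := by
      ext s; simp [rowSymbols, colSymbols, eq_comm]
    rw [hf, hrc i j]
  -- counting cells: v * e = r * c
  have hveN : v * e = r * c := by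
    calc v * e = ∑ _s : Fin v, e := by
          rw [Finset.sum_const, Finset.card_univ, Fintype.card_fin, smul_eq_mul]
      _ = ∑ s : Fin v, (Finset.univ.filter fun p : Fin r × Fin c => T p.1 p.2 = s).card := by
          simp [hrep]
      _ = (Finset.univ : Finset (Fin r × Fin c)).card :=
          (Finset.card_eq_sum_card_fiberwise fun p _ => mem_univ _).symm
      _ = r * c := by simp
  have hvQ : (v : ℚ) + 1 = r + c := by exact_mod_cast hv
  have hveQ : (v : ℚ) * e = r * c := by exact_mod_cast hveN
  -- lrc = e
  have B1 : (lrc : ℚ) = e := by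
    have key : (r : ℚ) * c * lrc = v * (e * e) := by
      calc (r : ℚ) * c * lrc = ∑ _i : Fin r, ∑ _j : Fin c, (lrc : ℚ) := by
            simp [Finset.sum_const, Finset.card_univ]; ring
        _ = ∑ i : Fin r, ∑ j : Fin c, ∑ s, nr s i * nc s j :=
            Finset.sum_congr rfl fun i _ => Finset.sum_congr rfl fun j _ => (A7 i j).symm
        _ = ∑ i : Fin r, ∑ s, nr s i * ∑ j, nc s j := by
            refine Finset.sum_congr rfl fun i _ => ?_
            rw [Finset.sum_comm]
            exact Finset.sum_congr rfl fun s _ => (Finset.mul_sum _ _ _).symm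
        _ = ∑ s, (∑ i, nr s i) * (e : ℚ) := by
            rw [Finset.sum_comm]
            refine Finset.sum_congr rfl fun s _ => ?_
            rw [A2 s, ← Finset.sum_mul]
        _ = ∑ _s : Fin v, (e : ℚ) * e := Finset.sum_congr rfl fun s _ => by rw [A1 s]
        _ = v * (e * e) := by
            rw [Finset.sum_const, Finset.card_univ, Fintype.card_fin, nsmul_eq_mul]
    have hrc0 : (r : ℚ) * c ≠ 0 := by
      have : (0 : ℚ) < r * c := by positivity
      exact ne_of_gt this
    have : (r : ℚ) * c * lrc = (r : ℚ) * c * e := by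
      rw [key, ← hveQ]; ring
    exact mul_left_cancel₀ hrc0 this
  -- lrr = c - e
  have B2 : (lrr : ℚ) = c - e := by
    set i₀ : Fin r := ⟨0, hrpos⟩
    have lhs : ∑ i' ∈ Finset.univ.erase i₀, (∑ s, nr s i₀ * nr s i')
        = ((r : ℚ) - 1) * lrr := by
      rw [Finset.sum_congr rfl fun i' hi' =>
        A5 i₀ i' (Ne.symm (Finset.mem_erase.mp hi').1),
        Finset.sum_const, Finset.card_erase_of_mem (mem_univ _), Finset.card_univ,
        Fintype.card_fin, nsmul_eq_mul, Nat.cast_sub hrpos, Nat.cast_one]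
    have rhs : ∑ i' ∈ Finset.univ.erase i₀, (∑ s, nr s i₀ * nr s i')
        = (c : ℚ) * ((e : ℚ) - 1) := by
      rw [Finset.sum_comm]
      have h1 : ∀ s, ∑ i' ∈ Finset.univ.erase i₀, nr s i₀ * nr s i'
          = nr s i₀ * ((e : ℚ) - nr s i₀) := by
        intro s
        rw [← Finset.mul_sum, Finset.sum_erase_eq_sub (mem_univ i₀), A1 s]
      rw [Finset.sum_congr rfl fun s _ => h1 s]
      have h2 : ∀ s, nr s i₀ * ((e : ℚ) - nr s i₀) = nr s i₀ * e - nr s i₀ := by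
        intro s
        have : nr s i₀ * nr s i₀ = nr s i₀ := by
          rw [hnr]; by_cases h : ∃ j, T i₀ j = s <;> simp [h]
        nlinarith [this]
      rw [Finset.sum_congr rfl fun s _ => h2 s, Finset.sum_sub_distrib,
        ← Finset.sum_mul, A3 i₀]
      ring
    have key : ((r : ℚ) - 1) * lrr = ((r : ℚ) - 1) * ((c : ℚ) - e) := by
      rw [← lhs, rhs]
      linear_combination hveQ - (e : ℚ) * hvQ
    have hr1 : (r : ℚ) - 1 ≠ 0 := by
      have : (2 : ℚ) ≤ r := by exact_mod_cast hr2
      linarith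
    exact mul_left_cancel₀ hr1 key
  -- lcc = r - e
  have B3 : (lcc : ℚ) = r - e := by
    set j₀ : Fin c := ⟨0, hcpos⟩
    have lhs : ∑ j' ∈ Finset.univ.erase j₀, (∑ s, nc s j₀ * nc s j')
        = ((c : ℚ) - 1) * lcc := by
      rw [Finset.sum_congr rfl fun j' hj' =>
        A6 j₀ j' (Ne.symm (Finset.mem_erase.mp hj').1),
        Finset.sum_const, Finset.card_erase_of_mem (mem_univ _), Finset.card_univ,
        Fintype.card_fin, nsmul_eq_mul, Nat.cast_sub hcpos, Nat.cast_one]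
    have rhs : ∑ j' ∈ Finset.univ.erase j₀, (∑ s, nc s j₀ * nc s j')
        = (r : ℚ) * ((e : ℚ) - 1) := by
      rw [Finset.sum_comm]
      have h1 : ∀ s, ∑ j' ∈ Finset.univ.erase j₀, nc s j₀ * nc s j'
          = nc s j₀ * ((e : ℚ) - nc s j₀) := by
        intro s
        rw [← Finset.mul_sum, Finset.sum_erase_eq_sub (mem_univ j₀), A2 s]
      rw [Finset.sum_congr rfl fun s _ => h1 s]
      have h2 : ∀ s, nc s j₀ * ((e : ℚ) - nc s j₀) = nc s j₀ * e - nc s j₀ := by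
        intro s
        have : nc s j₀ * nc s j₀ = nc s j₀ := by
          rw [hnc]; by_cases h : ∃ i, T i j₀ = s <;> simp [h]
        nlinarith [this]
      rw [Finset.sum_congr rfl fun s _ => h2 s, Finset.sum_sub_distrib,
        ← Finset.sum_mul, A4 j₀]
      ring
    have key : ((c : ℚ) - 1) * lcc = ((c : ℚ) - 1) * ((r : ℚ) - e) := by
      rw [← lhs, rhs]
      linear_combination hveQ - (e : ℚ) * hvQ
    have hc1 : (c : ℚ) - 1 ≠ 0 := by
      have : (2 : ℚ) ≤ c := by exact_mod_cast hc2
      linarith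
    exact mul_left_cancel₀ hc1 key
  -- the symbol-intersection matrix
  set S : Fin v → Fin v → ℚ :=
    fun s t => (∑ i, nr s i * nr t i) + (∑ j, nc s j * nc t j) with hS
  have Wr : ∀ i i' : Fin r, ∑ u, nr u i * nr u i'
      = (e : ℚ) * (if i = i' then 1 else 0) + ((c : ℚ) - e) := by
    intro i i'
    by_cases h : i = i'
    · subst h
      have hsq : ∀ u, nr u i * nr u i = nr u i := fun u => by
        rw [hnr]; by_cases hx : ∃ j, T i j = u <;> simp [hx]
      rw [Finset.sum_congr rfl fun u _ => hsq u, A3 i, if_pos rfl]; ring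
    · rw [A5 i i' h, B2, if_neg h]; ring
  have Wc : ∀ j j' : Fin c, ∑ u, nc u j * nc u j'
      = (e : ℚ) * (if j = j' then 1 else 0) + ((r : ℚ) - e) := by
    intro j j'
    by_cases h : j = j'
    · subst h
      have hsq : ∀ u, nc u j * nc u j = nc u j := fun u => by
        rw [hnc]; by_cases hx : ∃ i, T i j = u <;> simp [hx]
      rw [Finset.sum_congr rfl fun u _ => hsq u, A4 j, if_pos rfl]; ring
    · rw [A6 j j' h, B3, if_neg h]; ring
  have Wrc : ∀ (i : Fin r) (j : Fin c), ∑ u, nr u i * nc u j = (e : ℚ) := fun i j => by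
    rw [A7 i j, B1]
  have K1 : ∀ s t, ∑ u, S s u * S u t = (e : ℚ) * S s t + ((v : ℚ) + 1) * e^2 := by
    intro s t
    have expand : ∀ u, S s u * S u t
        = (∑ i, nr s i * nr u i) * (∑ i, nr t i * nr u i)
          + (∑ i, nr s i * nr u i) * (∑ j, nc t j * nc u j)
          + ((∑ j, nc s j * nc u j) * (∑ i, nr t i * nr u i)
          + (∑ j, nc s j * nc u j) * (∑ j, nc t j * nc u j)) := by
      intro u
      have c1 : (∑ i, nr u i * nr t i) = ∑ i, nr t i * nr u i :=
        Finset.sum_congr rfl fun i _ => mul_comm _ _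
      have c2 : (∑ j, nc u j * nc t j) = ∑ j, nc t j * nc u j :=
        Finset.sum_congr rfl fun j _ => mul_comm _ _
      rw [hS]
      dsimp only
      rw [c1, c2]; ring
    rw [Finset.sum_congr rfl fun u _ => expand u, Finset.sum_add_distrib,
      Finset.sum_add_distrib, Finset.sum_add_distrib]
    have e1 : ∑ u, (∑ i, nr s i * nr u i) * (∑ i, nr t i * nr u i)
        = (e : ℚ) * (∑ i, nr s i * nr t i) + ((c : ℚ) - e) * ((e : ℚ) * e) := by
      rw [sum_mul_sum_comm (fun u i => nr u i) (fun u i => nr u i) (nr s) (nr t)]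
      rw [Finset.sum_congr rfl fun i _ => Finset.sum_congr rfl fun i' _ => by rw [Wr i i']]
      rw [eval_quad, A1 s, A1 t]
    have e2 : ∑ u, (∑ i, nr s i * nr u i) * (∑ j, nc t j * nc u j)
        = (e : ℚ) * ((e : ℚ) * e) := by
      rw [sum_mul_sum_comm (fun u i => nr u i) (fun u j => nc u j) (nr s) (nc t)]
      rw [Finset.sum_congr rfl fun i _ => Finset.sum_congr rfl fun j _ => by rw [Wrc i j]]
      rw [eval_cross, A1 s, A2 t]
    have e3 : ∑ u, (∑ j, nc s j * nc u j) * (∑ i, nr t i * nr u i)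
        = (e : ℚ) * ((e : ℚ) * e) := by
      rw [sum_mul_sum_comm (fun u j => nc u j) (fun u i => nr u i) (nc s) (nr t)]
      have hflip : ∀ (j : Fin c) (i : Fin r), ∑ u, nc u j * nr u i = (e : ℚ) := fun j i => by
        rw [Finset.sum_congr rfl fun u _ => mul_comm _ _, Wrc i j]
      rw [Finset.sum_congr rfl fun j _ => Finset.sum_congr rfl fun i _ => by rw [hflip j i]]
      rw [eval_cross, A2 s, A1 t]
    have e4 : ∑ u, (∑ j, nc s j * nc u j) * (∑ j, nc t j * nc u j)
        = (e : ℚ) * (∑ j, nc s j * nc t j) + ((r : ℚ) - e) * ((e : ℚ) * e) := by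
      rw [sum_mul_sum_comm (fun u j => nc u j) (fun u j => nc u j) (nc s) (nc t)]
      rw [Finset.sum_congr rfl fun j _ => Finset.sum_congr rfl fun j' _ => by rw [Wc j j']]
      rw [eval_quad, A2 s, A2 t]
    rw [e1, e2, e3, e4, hS]
    dsimp only
    linear_combination (-(e : ℚ)^2) * hvQ
  have K2 : ∀ s, S s s = 2 * (e : ℚ) := by
    intro s
    rw [hS]
    dsimp only
    have h1 : ∑ i, nr s i * nr s i = ∑ i, nr s i := Finset.sum_congr rfl fun i _ => by
      rw [hnr]; by_cases hx : ∃ j, T i j = s <;> simp [hx]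
    have h2 : ∑ j, nc s j * nc s j = ∑ j, nc s j := Finset.sum_congr rfl fun j _ => by
      rw [hnc]; by_cases hx : ∃ i, T i j = s <;> simp [hx]
    rw [h1, h2, A1 s, A2 s]; ring
  have K3 : ∀ s, ∑ t, S s t = ((v : ℚ) + 1) * e := by
    intro s
    rw [hS]
    dsimp only
    rw [Finset.sum_add_distrib]
    have h1 : ∑ t, ∑ i, nr s i * nr t i = (e : ℚ) * c := by
      rw [Finset.sum_comm]
      calc ∑ i, ∑ t, nr s i * nr t i = ∑ i, nr s i * (c : ℚ) :=
            Finset.sum_congr rfl fun i _ => by rw [← Finset.mul_sum, A3 i]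
        _ = (e : ℚ) * c := by rw [← Finset.sum_mul, A1 s]
    have h2 : ∑ t, ∑ j, nc s j * nc t j = (e : ℚ) * r := by
      rw [Finset.sum_comm]
      calc ∑ j, ∑ t, nc s j * nc t j = ∑ j, nc s j * (r : ℚ) :=
            Finset.sum_congr rfl fun j _ => by rw [← Finset.mul_sum, A4 j]
        _ = (e : ℚ) * r := by rw [← Finset.sum_mul, A2 s]
    rw [h1, h2]
    linear_combination (-(e : ℚ)) * hvQ
  have hsym : ∀ s t, S s t = S t s := by
    intro s t
    rw [hS]
    dsimp only
    exact congrArg₂ (· + ·) (Finset.sum_congr rfl fun i _ => mul_comm _ _)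
      (Finset.sum_congr rfl fun j _ => mul_comm _ _)
  have inner0 : ∀ s, ∑ t, (S s t - (if s = t then (e : ℚ) else 0) - e)^2 = 0 := by
    intro s
    have expand : ∀ t, (S s t - (if s = t then (e : ℚ) else 0) - e)^2
        = S s t * S t s
          - 2 * (e : ℚ) * S s t
          - 2 * ((if s = t then (e : ℚ) else 0) * S s t)
          + (if s = t then (e : ℚ) else 0)^2
          + 2 * (e : ℚ) * (if s = t then (e : ℚ) else 0)
          + (e : ℚ)^2 := by
      intro t
      rw [← hsym s t]
      ring
    rw [Finset.sum_congr rfl fun t _ => expand t, Finset.sum_add_distrib,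
      Finset.sum_add_distrib, Finset.sum_add_distrib, Finset.sum_sub_distrib,
      Finset.sum_sub_distrib]
    have p1 : ∑ t, 2 * (e : ℚ) * S s t = 2 * e * (((v : ℚ) + 1) * e) := by
      rw [← Finset.mul_sum, K3 s]
    have p2 : ∑ t, 2 * ((if s = t then (e : ℚ) else 0) * S s t) = 2 * (e * S s s) := by
      rw [← Finset.mul_sum]
      congr 1
      have h : ∀ t, (if s = t then (e : ℚ) else 0) * S s t
          = if s = t then (e : ℚ) * S s t else 0 := fun t => by
        by_cases hx : s = t <;> simp [hx]
      rw [Finset.sum_congr rfl fun t _ => h t, Finset.sum_ite_eq, if_pos (mem_univ s)]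
    have p3 : ∑ t, (if s = t then (e : ℚ) else 0)^2 = (e : ℚ)^2 := by
      have h : ∀ t, ((if s = t then (e : ℚ) else 0))^2
          = if s = t then (e : ℚ)^2 else 0 := fun t => by
        by_cases hx : s = t <;> simp [hx]
      rw [Finset.sum_congr rfl fun t _ => h t, Finset.sum_ite_eq, if_pos (mem_univ s)]
    have p4 : ∑ t, 2 * (e : ℚ) * (if s = t then (e : ℚ) else 0) = 2 * (e : ℚ) * e := by
      have h : ∀ t, 2 * (e : ℚ) * (if s = t then (e : ℚ) else 0)
          = if s = t then 2 * (e : ℚ) * e else 0 := fun t => by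
        by_cases hx : s = t <;> simp [hx]
      rw [Finset.sum_congr rfl fun t _ => h t, Finset.sum_ite_eq, if_pos (mem_univ s)]
    have p5 : ∑ _t : Fin v, (e : ℚ)^2 = v * e^2 := by
      rw [Finset.sum_const, Finset.card_univ, Fintype.card_fin, nsmul_eq_mul]
    rw [K1 s s, p1, p2, p3, p4, p5, K2 s]
    ring
  have hterm := (Finset.sum_eq_zero_iff_of_nonneg fun t _ => sq_nonneg _).mp
    (inner0 s₁) s₂ (mem_univ s₂)
  rw [if_neg hs] at hterm
  have hSe : S s₁ s₂ = (e : ℚ) := by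
    have h0 := pow_eq_zero_iff (two_ne_zero) |>.mp hterm
    linarith
  have hcards : S s₁ s₂ = ((Finset.univ.filter fun i : Fin r =>
        (∃ j, T i j = s₁) ∧ (∃ j, T i j = s₂)).card : ℚ)
      + ((Finset.univ.filter fun j : Fin c =>
        (∃ i, T i j = s₁) ∧ (∃ i, T i j = s₂)).card : ℚ) := by
    rw [hS]
    dsimp only
    rw [hnr, hnc]
    dsimp only
    rw [Finset.sum_congr rfl fun i _ => ind_mul _ _, Finset.sum_boole,
      Finset.sum_congr rfl fun j _ => ind_mul _ _, Finset.sum_boole]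
  rw [hcards] at hSe
  exact_mod_cast hSe
end

section
/- Every Youden rectangle with λ = 1 yields, for every choice of removed column, a proper double array under the column-removal construction; i.e., the resulting array satisfies (TA1), (TA2), (TA3), (TA4), but there exist a row and a column sharing a number of symbols different from some other row-column pair (condition (TA5) fails). -/
/-!
The columns of `Y` are the blocks of a symmetric design with `λ = 1`: `n = k(k-1) + 1` points,
blocks of size `k`, two blocks meeting in one point, and (rows being permutations) every point
in `k` blocks. Counting the blocks through a point gives the dual property that two points lie
in exactly one block, which is (TA4). (TA2) and (TA3) are direct counts, using that two symbols
of one column never both lie in column `c`. For (TA5) fix a row `i`: the `k - 1` columns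
`j ≠ c` with `Y i j` in column `c` cover the `(k-1)²` symbols outside column `c` with total
multiplicity `(k-1)²`, so a constant row-column intersection would make every such symbol
covered exactly once; but two of these columns share a symbol outside column `c`.
-/

open Finset

/-- The set of symbols occurring in column `j` of a `k × n` array. -/
def colSet {k n : ℕ} (A : Fin k → Fin n → Fin n) (j : Fin n) : Finset (Fin n) :=
  Finset.univ.image fun i => A i j

section Blocks

variable {ι α : Type*} [Fintype ι] [DecidableEq α] {B : ι → Finset α}

lemma card_filter_mem_mem_le_one (hB : ∀ j j', j ≠ j' → #(B j ∩ B j') ≤ 1) {s t : α}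
    (hst : s ≠ t) : #{j | s ∈ B j ∧ t ∈ B j} ≤ 1 := by
  refine card_le_one.mpr fun j hj j' hj' => by_contra fun hne => ?_
  simp only [mem_filter, mem_univ, true_and] at hj hj'
  have hpair : #({s, t} : Finset α) ≤ #(B j ∩ B j') :=
    card_le_card (by simp [insert_subset_iff, hj, hj'])
  have := hpair.trans (hB j j' hne)
  rw [card_pair hst] at this
  omega

variable [Fintype α]

/-- The blocks through `s`, with `s` removed, are pairwise disjoint and of total size
`r * (k - 1) = |α| - 1`, so they cover every other point. -/
lemma exists_mem_mem_of_mul_eq (hB : ∀ j j', j ≠ j' → #(B j ∩ B j') ≤ 1) {k r : ℕ}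
    (hBk : ∀ j, #(B j) = k) (hr : ∀ s, #{j | s ∈ B j} = r)
    (hrk : r * (k - 1) = Fintype.card α - 1) {s t : α} (hst : s ≠ t) :
    ∃ j, s ∈ B j ∧ t ∈ B j := by
  set J : Finset ι := {j | s ∈ B j}
  have hdisj : (J : Set ι).PairwiseDisjoint fun j => (B j).erase s := by
    intro j hj j' hj' hne
    refine disjoint_left.mpr fun x hx hx' => ?_
    simp only [J, coe_filter, mem_univ, true_and, Set.mem_ofPred_eq] at hj hj'
    rw [mem_erase] at hx hx'
    have h := card_filter_mem_mem_le_one hB (Ne.symm hx.1)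
    rw [card_le_one] at h
    exact hne (h j (by simp [hj, hx.2]) j' (by simp [hj', hx'.2]))
  have hcover : J.biUnion (fun j => (B j).erase s) = univ.erase s := by
    refine eq_of_subset_of_card_le (fun x hx => ?_) ?_
    · obtain ⟨j, -, hx⟩ := mem_biUnion.mp hx
      exact mem_erase.mpr ⟨(mem_erase.mp hx).1, mem_univ x⟩
    · have hsize : ∀ j ∈ J, #((B j).erase s) = k - 1 := fun j hj => by
        rw [card_erase_of_mem (mem_filter.mp hj).2, hBk]
      rw [card_biUnion hdisj, sum_congr rfl hsize, sum_const, smul_eq_mul, hr, hrk,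
        card_erase_of_mem (mem_univ s), card_univ]
  obtain ⟨j, hj, ht⟩ := mem_biUnion.mp (hcover ▸ mem_erase.mpr ⟨hst.symm, mem_univ t⟩)
  exact ⟨j, (mem_filter.mp hj).2, (mem_erase.mp ht).2⟩

lemma card_filter_mem_mem_eq_one (hB : ∀ j j', j ≠ j' → #(B j ∩ B j') ≤ 1) {k r : ℕ}
    (hBk : ∀ j, #(B j) = k) (hr : ∀ s, #{j | s ∈ B j} = r)
    (hrk : r * (k - 1) = Fintype.card α - 1) {s t : α} (hst : s ≠ t) :
    #{j | s ∈ B j ∧ t ∈ B j} = 1 := by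
  obtain ⟨j, hj⟩ := exists_mem_mem_of_mul_eq hB hBk hr hrk hst
  have : 0 < #{j | s ∈ B j ∧ t ∈ B j} := card_pos.mpr ⟨j, by simpa using hj⟩
  have := card_filter_mem_mem_le_one hB hst
  omega

end Blocks

section Youden

variable {n k : ℕ} {Y : Fin k → Fin n → Fin n}

lemma mem_colSet {s j : Fin n} : s ∈ colSet Y j ↔ ∃ i, Y i j = s := by
  simp [colSet]

lemma card_colSet (hcol : ∀ j : Fin n, Function.Injective fun i => Y i j) (j : Fin n) :
    #(colSet Y j) = k := by
  rw [colSet, card_image_of_injective _ (hcol j), card_univ, Fintype.card_fin]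

lemma card_filter_row_mem (hrow : ∀ i, Function.Injective (Y i)) (i : Fin k)
    (S : Finset (Fin n)) : #{j | Y i j ∈ S} = #S :=
  card_nbij (Y i) (fun j hj => (mem_filter.mp hj).2) ((hrow i).injOn)
    fun s hs => by
      obtain ⟨j, rfl⟩ := (Finite.injective_iff_surjective.mp (hrow i)) s
      exact ⟨j, by simpa using hs, rfl⟩

lemma card_filter_mem_colSet (hrow : ∀ i, Function.Injective (Y i))
    (hcol : ∀ j : Fin n, Function.Injective fun i => Y i j) (s : Fin n) :
    #{j | s ∈ colSet Y j} = k := by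
  choose g hg using fun i => Finite.injective_iff_surjective.mp (hrow i) s
  have himage : ({j | s ∈ colSet Y j} : Finset (Fin n)) = univ.image g := by
    ext j
    simp only [mem_filter, mem_univ, true_and, mem_colSet, mem_image]
    constructor
    · rintro ⟨i, hi⟩
      exact ⟨i, (hrow i) ((hg i).trans hi.symm)⟩
    · rintro ⟨i, rfl⟩
      exact ⟨i, hg i⟩
  have hg_inj : Function.Injective g := fun i i' h =>
    hcol (g i) (show Y i (g i) = Y i' (g i) by rw [hg, h, hg])
  rw [himage, card_image_of_injective _ hg_inj, card_univ, Fintype.card_fin]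

lemma card_sdiff_colSet (hcol : ∀ j : Fin n, Function.Injective fun i => Y i j)
    (hdes : ∀ j j' : Fin n, j ≠ j' → #(colSet Y j ∩ colSet Y j') = 1) {j c : Fin n}
    (hjc : j ≠ c) : #(colSet Y j \ colSet Y c) = k - 1 := by
  have := card_sdiff_add_card_inter (colSet Y j) (colSet Y c)
  rw [hdes j c hjc, card_colSet hcol] at this
  omega

/-- The symbols `j ≠ c` missing from row `i` of the derived array. -/
def rowHits (Y : Fin k → Fin n → Fin n) (i : Fin k) (c : Fin n) : Finset (Fin n) :=
  {j | j ≠ c ∧ Y i j ∈ colSet Y c}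

lemma card_rowHits (hrow : ∀ i, Function.Injective (Y i))
    (hcol : ∀ j : Fin n, Function.Injective fun i => Y i j) (i : Fin k) (c : Fin n) :
    #(rowHits Y i c) = k - 1 := by
  have herase : rowHits Y i c = ({j | Y i j ∈ colSet Y c} : Finset (Fin n)).erase c := by
    ext j
    simp [rowHits]
  rw [herase, card_erase_of_mem (by simp [mem_colSet]), card_filter_row_mem hrow,
    card_colSet hcol]

lemma disjoint_rowHits (hcol : ∀ j : Fin n, Function.Injective fun i => Y i j)
    (hdes : ∀ j j' : Fin n, j ≠ j' → #(colSet Y j ∩ colSet Y j') = 1) {i i' : Fin k}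
    (hii : i ≠ i') (c : Fin n) : Disjoint (rowHits Y i c) (rowHits Y i' c) := by
  refine disjoint_left.mpr fun j hj hj' => ?_
  simp only [rowHits, mem_filter, mem_univ, true_and] at hj hj'
  have hpair : #({Y i j, Y i' j} : Finset (Fin n)) ≤ #(colSet Y j ∩ colSet Y c) :=
    card_le_card (by simp [insert_subset_iff, mem_colSet, hj.2, hj'.2])
  rw [card_pair fun h => hii (hcol j h), hdes j c hj.1] at hpair
  omega

lemma card_filter_rows_not_mem_colSet (hrow : ∀ i, Function.Injective (Y i))
    (hcol : ∀ j : Fin n, Function.Injective fun i => Y i j)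
    (hdes : ∀ j j' : Fin n, j ≠ j' → #(colSet Y j ∩ colSet Y j') = 1) {i i' : Fin k}
    (hii : i ≠ i') (c : Fin n) :
    #{j | j ≠ c ∧ Y i j ∉ colSet Y c ∧ Y i' j ∉ colSet Y c} = n - 1 - 2 * (k - 1) := by
  have hsplit :
      ({j | j ≠ c ∧ Y i j ∉ colSet Y c ∧ Y i' j ∉ colSet Y c} : Finset (Fin n)) =
        univ.erase c \ (rowHits Y i c ∪ rowHits Y i' c) := by
    ext j
    simp only [rowHits, mem_filter, mem_sdiff, mem_union, mem_erase, mem_univ, true_and,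
      and_true]
    tauto
  have hsub : rowHits Y i c ∪ rowHits Y i' c ⊆ univ.erase c := by
    simp only [rowHits, subset_iff, mem_union, mem_filter, mem_erase, mem_univ, true_and,
      and_true]
    tauto
  rw [hsplit, card_sdiff_of_subset hsub, card_union_of_disjoint (disjoint_rowHits hcol hdes hii c),
    card_rowHits hrow hcol, card_rowHits hrow hcol, card_erase_of_mem (mem_univ c), card_univ,
    Fintype.card_fin, two_mul]

lemma card_filter_ne_mem_mem_colSet (hlam : k * (k - 1) = n - 1)
    (hrow : ∀ i, Function.Injective (Y i))
    (hcol : ∀ j : Fin n, Function.Injective fun i => Y i j)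
    (hdes : ∀ j j' : Fin n, j ≠ j' → #(colSet Y j ∩ colSet Y j') = 1) {c s t : Fin n}
    (hs : s ∉ colSet Y c) (hst : s ≠ t) :
    #{j | j ≠ c ∧ s ∈ colSet Y j ∧ t ∈ colSet Y j} = 1 := by
  have hfilter : ({j | j ≠ c ∧ s ∈ colSet Y j ∧ t ∈ colSet Y j} : Finset (Fin n)) =
      ({j | s ∈ colSet Y j ∧ t ∈ colSet Y j} : Finset (Fin n)) :=
    filter_congr fun j _ => ⟨fun h => h.2, fun h => ⟨fun hjc => hs (hjc ▸ h.1), h⟩⟩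
  rw [hfilter]
  exact card_filter_mem_mem_eq_one (fun j j' h => (hdes j j' h).le) (card_colSet hcol)
    (card_filter_mem_colSet hrow hcol) (by rw [Fintype.card_fin, hlam]) hst

lemma card_filter_row_not_mem_add_card_filter_rowHits
    (hrow : ∀ i, Function.Injective (Y i))
    (hcol : ∀ j : Fin n, Function.Injective fun i => Y i j) (i : Fin k) {c s : Fin n}
    (hs : s ∉ colSet Y c) :
    #{j | j ≠ c ∧ Y i j ∉ colSet Y c ∧ s ∈ colSet Y j} +
      #{j ∈ rowHits Y i c | s ∈ colSet Y j} = k := by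
  have hne : ∀ j, s ∈ colSet Y j → j ≠ c := fun j h hjc => hs (hjc ▸ h)
  refine Eq.trans ?_ (card_filter_mem_colSet hrow hcol s)
  rw [← card_filter_add_card_filter_not (s := ({j | s ∈ colSet Y j} : Finset (Fin n)))
    (fun j => Y i j ∉ colSet Y c), filter_filter, filter_filter, rowHits, filter_filter]
  congr 2 <;> ext j <;> simp only [mem_filter, mem_univ, true_and, not_not] <;> grind

lemma sum_card_filter_rowHits (hrow : ∀ i, Function.Injective (Y i))
    (hcol : ∀ j : Fin n, Function.Injective fun i => Y i j)
    (hdes : ∀ j j' : Fin n, j ≠ j' → #(colSet Y j ∩ colSet Y j') = 1)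
    (i : Fin k) (c : Fin n) :
    ∑ s ∈ (colSet Y c)ᶜ, #{j ∈ rowHits Y i c | s ∈ colSet Y j} = (k - 1) * (k - 1) := by
  refine (sum_card_bipartiteAbove_eq_sum_card_bipartiteBelow
    (r := fun s j => s ∈ colSet Y j)).trans ?_
  have hbelow : ∀ j ∈ rowHits Y i c,
      #((colSet Y c)ᶜ.bipartiteBelow (fun s j => s ∈ colSet Y j) j) = k - 1 := fun j hj => by
    rw [← card_sdiff_colSet hcol hdes (mem_filter.mp hj).2.1]
    congr 1
    ext s
    simp [bipartiteBelow, and_comm]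
  rw [sum_congr rfl hbelow, sum_const, card_rowHits hrow hcol, smul_eq_mul]

lemma exists_two_le_card_filter_rowHits (hrow : ∀ i, Function.Injective (Y i))
    (hcol : ∀ j : Fin n, Function.Injective fun i => Y i j)
    (hdes : ∀ j j' : Fin n, j ≠ j' → #(colSet Y j ∩ colSet Y j') = 1) (hk : 3 ≤ k)
    (i : Fin k) (c : Fin n) :
    ∃ u ∉ colSet Y c, 2 ≤ #{j ∈ rowHits Y i c | u ∈ colSet Y j} := by
  have htwo : 1 < #(rowHits Y i c) := by
    rw [card_rowHits hrow hcol]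
    omega
  obtain ⟨j₁, hj₁, j₂, hj₂, hj⟩ := one_lt_card.mp htwo
  simp only [rowHits, mem_filter, mem_univ, true_and] at hj₁ hj₂
  obtain ⟨u, hu⟩ := card_eq_one.mp (hdes j₁ j₂ hj)
  obtain ⟨hu₁, hu₂⟩ := mem_inter.mp (hu ▸ mem_singleton_self u)
  have hmeet : ∀ j, j ≠ c → Y i j ∈ colSet Y c → u ∈ colSet Y j → u ∈ colSet Y c →
      u = Y i j := fun j hjc hYj huj huc =>
    card_le_one.mp (hdes j c hjc).le _ (mem_inter.mpr ⟨huj, huc⟩) _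
      (mem_inter.mpr ⟨mem_colSet.mpr ⟨i, rfl⟩, hYj⟩)
  refine ⟨u, fun huc => hj (hrow i ?_), ?_⟩
  · rw [← hmeet j₁ hj₁.1 hj₁.2 hu₁ huc, ← hmeet j₂ hj₂.1 hj₂.2 hu₂ huc]
  · rw [← card_pair hj]
    exact card_le_card (by simp [insert_subset_iff, rowHits, hj₁, hj₂, hu₁, hu₂])

lemma not_exists_forall_card_filter_row_col_eq (hlam : k * (k - 1) = n - 1) (hk : 3 ≤ k)
    (hrow : ∀ i, Function.Injective (Y i))
    (hcol : ∀ j : Fin n, Function.Injective fun i => Y i j)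
    (hdes : ∀ j j' : Fin n, j ≠ j' → #(colSet Y j ∩ colSet Y j') = 1) (c : Fin n) :
    ¬ ∃ l : ℕ, ∀ (i : Fin k) (s : Fin n), s ∉ colSet Y c →
      #{j | j ≠ c ∧ Y i j ∉ colSet Y c ∧ s ∈ colSet Y j} = l := by
  rintro ⟨l, hl⟩
  let i : Fin k := ⟨0, by omega⟩
  have hhits : ∀ s ∈ (colSet Y c)ᶜ, #{j ∈ rowHits Y i c | s ∈ colSet Y j} = k - l :=
    fun s hs => by
      have := card_filter_row_not_mem_add_card_filter_rowHits hrow hcol i (mem_compl.mp hs)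
      rw [hl i s (mem_compl.mp hs)] at this
      omega
  have hcompl : #(colSet Y c)ᶜ = (k - 1) * (k - 1) := by
    obtain ⟨m, rfl⟩ : ∃ m, k = m + 1 := ⟨k - 1, by omega⟩
    rw [card_compl, card_colSet hcol, Fintype.card_fin, Nat.add_sub_cancel]
    rw [Nat.add_sub_cancel, add_mul, one_mul] at hlam
    omega
  -- the average number of hits is `1`, yet some symbol is hit twice
  have hsum := sum_card_filter_rowHits hrow hcol hdes i c
  rw [sum_congr rfl hhits, sum_const, hcompl, smul_eq_mul,
    mul_eq_left₀ (Nat.mul_pos (by omega) (by omega)).ne'] at hsum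
  obtain ⟨u, hu, htwo⟩ := exists_two_le_card_filter_rowHits hrow hcol hdes hk i c
  rw [hhits u (mem_compl.mpr hu)] at htwo
  omega

end Youden

lemma three_le_of_mul_sub_one_eq {n k : ℕ} (hkn : k < n - 1) (hlam : k * (k - 1) = n - 1) :
    3 ≤ k := by
  by_contra! h
  interval_cases k <;> omega

theorem youden_lambda_one_proper_double_array_general (n k : ℕ)
    (hkn : k < n - 1)
    (hlam : k * (k - 1) = n - 1)
    (Y : Fin k → Fin n → Fin n)
    (hrow : ∀ i, Function.Injective (Y i))
    (hcol : ∀ j : Fin n, Function.Injective fun i => Y i j)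
    (hdes : ∀ j j' : Fin n, j ≠ j' →
      ((colSet Y j) ∩ (colSet Y j')).card = 1) :
    ∀ c : Fin n,
      -- (TA2) each symbol of the constructed array occurs k - 1 times
      (∀ j : Fin n, j ≠ c → ((colSet Y j) \ (colSet Y c)).card = k - 1) ∧
      -- (TA3) any two distinct rows share a constant number of symbols
      (∃ lrr : ℕ, ∀ i i' : Fin k, i ≠ i' →
        (Finset.univ.filter fun j : Fin n =>
          j ≠ c ∧ Y i j ∉ colSet Y c ∧ Y i' j ∉ colSet Y c).card = lrr) ∧
      -- (TA4) any two distinct columns share exactly 1 symbol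
      (∀ s s' : Fin n, s ∉ colSet Y c → s' ∉ colSet Y c → s ≠ s' →
        (Finset.univ.filter fun j : Fin n =>
          j ≠ c ∧ s ∈ colSet Y j ∧ s' ∈ colSet Y j).card = 1) ∧
      -- (TA5) fails: row-column intersections are not all equal
      ¬ (∃ lrc : ℕ, ∀ (i : Fin k) (s : Fin n), s ∉ colSet Y c →
        (Finset.univ.filter fun j : Fin n =>
          j ≠ c ∧ Y i j ∉ colSet Y c ∧ s ∈ colSet Y j).card = lrc) := fun c =>
  ⟨fun _ hjc => card_sdiff_colSet hcol hdes hjc,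
    ⟨_, fun _ _ hii => card_filter_rows_not_mem_colSet hrow hcol hdes hii c⟩,
    fun _ _ hs _ hst => card_filter_ne_mem_mem_colSet hlam hrow hcol hdes hs hst,
    not_exists_forall_card_filter_row_col_eq hlam (three_le_of_mul_sub_one_eq hkn hlam)
      hrow hcol hdes c⟩

/-- Theorem 3 of [NO15]: a Youden rectangle with `λ = 1` yields, for every
choice of removed column `c`, a proper double array: the resulting array
(rows indexed by `Fin k`, columns by symbols not in column `c`, symbols by
columns `j ≠ c` of `Y`) is equireplicate with replication `k - 1` (TA2), has
constant row-pair intersections (TA3) and constant column-pair intersections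
equal to `1` (TA4), but row-column intersections are not constant
(TA5 fails). -/
theorem youden_lambda_one_proper_double_array (n k : ℕ)
    (hk : 1 < k) (hkn : k < n - 1)
    (hlam : k * (k - 1) = n - 1)
    (Y : Fin k → Fin n → Fin n)
    (hrow : ∀ i, Function.Injective (Y i))
    (hcol : ∀ j : Fin n, Function.Injective fun i => Y i j)
    (hdes : ∀ j j' : Fin n, j ≠ j' →
      ((colSet Y j) ∩ (colSet Y j')).card = 1) :
    ∀ c : Fin n,
      -- (TA2) each symbol of the constructed array occurs k - 1 times
      (∀ j : Fin n, j ≠ c → ((colSet Y j) \ (colSet Y c)).card = k - 1) ∧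
      -- (TA3) any two distinct rows share a constant number of symbols
      (∃ lrr : ℕ, ∀ i i' : Fin k, i ≠ i' →
        (Finset.univ.filter fun j : Fin n =>
          j ≠ c ∧ Y i j ∉ colSet Y c ∧ Y i' j ∉ colSet Y c).card = lrr) ∧
      -- (TA4) any two distinct columns share exactly 1 symbol
      (∀ s s' : Fin n, s ∉ colSet Y c → s' ∉ colSet Y c → s ≠ s' →
        (Finset.univ.filter fun j : Fin n =>
          j ≠ c ∧ s ∈ colSet Y j ∧ s' ∈ colSet Y j).card = 1) ∧
      -- (TA5) fails: row-column intersections are not all equal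
      ¬ (∃ lrc : ℕ, ∀ (i : Fin k) (s : Fin n), s ∉ colSet Y c →
        (Finset.univ.filter fun j : Fin n =>
          j ≠ c ∧ Y i j ∉ colSet Y c ∧ s ∈ colSet Y j).card = lrc) :=
  youden_lambda_one_proper_double_array_general n k hkn hlam Y hrow hcol hdes
end
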